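/- arXiv:2411.07484 — 6 statements merged into one kernel-verified Lean document; each statement's English description precedes it below -/
import Mathlib

section
/- Let J : ℝⁿ × ℝᵐ × ℝᵈ → ℝ, write z = (x, u, θ) with the Euclidean product norm. Assume: (i) J is twice continuously differentiable; (ii) for each fixed (x, θ), the map u ↦ J(x, u, θ) is μ-strongly convex with μ > 0; (iii) ∇_z J is L₁-Lipschitz; (iv) the mixed derivative z ↦ ∇_θ∇_u J(z) is L₂-Lipschitz; (v) the Hessian z ↦ ∇²_u J(z) is L₃-Lipschitz. Fix x and let u* : ℝᵈ → ℝᵐ be differentiable with ∇_u J(x, u*(θ), θ) = 0 for all θ. Then the derivative map θ ↦ D u*(θ) is Lipschitz with constant L₂/μ + (L₁L₂ + L₁L₃)/μ² + L₁²L₃/μ³, that is, ‖D u*(θ) − D u*(θ')‖ ≤ (L₂/μ + (L₁L₂ + L₁L₃)/μ² + L₁²L₃/μ³)‖θ − θ'‖ for all θ, θ'. -/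
/-!
Differentiating the stationarity condition `∇_u J(x, u*(θ), θ) = 0` gives
`H(z_θ) ∘ Du*(θ) = -M(z_θ)` along `z_θ = (x, u*(θ), θ)`. Strong convexity makes `u ↦ ∇_u J`
strongly monotone, so its derivative is coercive, `μ‖v‖ ≤ ‖H(z) v‖`, and `M(z)` is bounded
by `L₁` since `∇J` is `L₁`-Lipschitz; hence `‖Du*‖ ≤ L₁/μ`, `u*` is `L₁/μ`-Lipschitz and
`‖z_θ - z_θ'‖ ≤ (1 + L₁/μ)‖θ - θ'‖`.
Subtracting the linear equations at `θ` and `θ'`,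
`H(z_θ)(Du*(θ) - Du*(θ')) = (M(z_θ') - M(z_θ)) + (H(z_θ') - H(z_θ)) Du*(θ')`,
so coercivity gives `μ‖Du*(θ) - Du*(θ')‖ ≤ (L₂ + L₃L₁/μ)(1 + L₁/μ)‖θ - θ'‖`,
which expands to the stated constant.
-/

/-- The product space `z = (x, u, θ)` equipped with the Euclidean (ℓ²) product norm. -/
abbrev DiffOP.Zspace (n m d : ℕ) : Type :=
  WithLp 2 (EuclideanSpace ℝ (Fin n) ×
    WithLp 2 (EuclideanSpace ℝ (Fin m) × EuclideanSpace ℝ (Fin d)))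

/-- Packaging `(x, u, θ)` as a point of the Euclidean product space. -/
noncomputable def DiffOP.mkz {n m d : ℕ} (x : EuclideanSpace ℝ (Fin n))
    (u : EuclideanSpace ℝ (Fin m)) (θ : EuclideanSpace ℝ (Fin d)) : DiffOP.Zspace n m d :=
  (WithLp.equiv 2 _).symm (x, (WithLp.equiv 2 _).symm (u, θ))

/-- The `x`-component of `z`. -/
def DiffOP.zx {n m d : ℕ} (z : DiffOP.Zspace n m d) : EuclideanSpace ℝ (Fin n) :=
  (WithLp.equiv 2 _ z).1

/-- The `u`-component of `z`. -/
def DiffOP.zu {n m d : ℕ} (z : DiffOP.Zspace n m d) : EuclideanSpace ℝ (Fin m) :=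
  (WithLp.equiv 2 _ (WithLp.equiv 2 _ z).2).1

/-- The `θ`-component of `z`. -/
def DiffOP.zθ {n m d : ℕ} (z : DiffOP.Zspace n m d) : EuclideanSpace ℝ (Fin d) :=
  (WithLp.equiv 2 _ (WithLp.equiv 2 _ z).2).2

open scoped RealInnerProductSpace Gradient
open Set

section ImplicitDerivative

variable {E F G : Type*} [NormedAddCommGroup E] [NormedSpace ℝ E] [NormedAddCommGroup F]
  [NormedSpace ℝ F] [NormedAddCommGroup G] [NormedSpace ℝ G]

theorem ContinuousLinearMap.mul_opNorm_le_opNorm_comp {A : F →L[ℝ] G} {μ : ℝ}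
    (hA : ∀ v, μ * ‖v‖ ≤ ‖A v‖) (D : E →L[ℝ] F) : μ * ‖D‖ ≤ ‖A.comp D‖ := by
  rcases le_or_gt μ 0 with hμ | hμ
  · exact (mul_nonpos_of_nonpos_of_nonneg hμ (norm_nonneg D)).trans (norm_nonneg _)
  rw [← le_div_iff₀' hμ]
  refine D.opNorm_le_bound (by positivity) fun w => ?_
  rw [div_mul_eq_mul_div, le_div_iff₀' hμ]
  exact (hA (D w)).trans ((A.comp D).le_opNorm w)

theorem ContinuousLinearMap.mul_norm_sub_le_of_comp_eq_neg {A A' : F →L[ℝ] G}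
    {B B' : E →L[ℝ] G} {D D' : E →L[ℝ] F} {μ : ℝ} (hA : ∀ v, μ * ‖v‖ ≤ ‖A v‖)
    (hD : A.comp D = -B) (hD' : A'.comp D' = -B') :
    μ * ‖D - D'‖ ≤ ‖B - B'‖ + ‖A - A'‖ * ‖D'‖ := by
  have e : A.comp (D - D') = (B' - B) + (A' - A).comp D' := by
    rw [comp_sub, sub_comp, hD, hD']
    abel
  calc μ * ‖D - D'‖ ≤ ‖A.comp (D - D')‖ := mul_opNorm_le_opNorm_comp hA _
    _ ≤ ‖B' - B‖ + ‖(A' - A).comp D'‖ := e ▸ norm_add_le _ _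
    _ ≤ ‖B' - B‖ + ‖A' - A‖ * ‖D'‖ := by gcongr; exact opNorm_comp_le _ _
    _ = ‖B - B'‖ + ‖A - A'‖ * ‖D'‖ := by rw [norm_sub_rev B', norm_sub_rev A']

theorem fderiv_comp_fderiv_eq_neg_of_apply_eq_zero {Φ : F × E → G} {u : E → F} {t : E}
    (hΦ : DifferentiableAt ℝ Φ (u t, t)) (hu : DifferentiableAt ℝ u t)
    (h0 : ∀ s, Φ (u s, s) = 0) :
    (fderiv ℝ (fun v => Φ (v, t)) (u t)).comp (fderiv ℝ u t)
      = -fderiv ℝ (fun s => Φ (u t, s)) t := by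
  have hfst : HasFDerivAt (fun v => Φ (v, t))
      ((fderiv ℝ Φ (u t, t)).comp (.inl ℝ F E)) (u t) :=
    hΦ.hasFDerivAt.comp (u t) (hasFDerivAt_prodMk_left (u t) t)
  have hsnd : HasFDerivAt (fun s => Φ (u t, s))
      ((fderiv ℝ Φ (u t, t)).comp (.inr ℝ F E)) t :=
    hΦ.hasFDerivAt.comp t (hasFDerivAt_prodMk_right (u t) t)
  have hgraph : HasFDerivAt (fun s => Φ (u s, s))
      ((fderiv ℝ Φ (u t, t)).comp ((fderiv ℝ u t).prod (.id ℝ E))) t :=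
    HasFDerivAt.comp (g := Φ) t hΦ.hasFDerivAt (hu.hasFDerivAt.prodMk (hasFDerivAt_id t))
  have hzero := hgraph.unique (by simpa only [h0] using hasFDerivAt_const (0 : G) t)
  rw [hfst.fderiv, hsnd.fderiv, eq_neg_iff_add_eq_zero, ← hzero]
  ext w
  simp [← map_add]

theorem norm_fderiv_sub_le_of_comp_eq_neg {Z : Type*} [SeminormedAddCommGroup Z] {u : E → F}
    (hu : Differentiable ℝ u) {z : E → Z} (hz : ∀ t t', ‖z t - z t'‖ ≤ ‖u t - u t'‖ + ‖t - t'‖)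
    {A : Z → F →L[ℝ] G} {B : Z → E →L[ℝ] G} {μ L₁ L₂ L₃ : ℝ} (hμ : 0 < μ)
    (hA : ∀ t v, μ * ‖v‖ ≤ ‖A (z t) v‖) (hB : ∀ t, ‖B (z t)‖ ≤ L₁)
    (hAu : ∀ t, (A (z t)).comp (fderiv ℝ u t) = -B (z t))
    (hBLip : ∀ a b, ‖B a - B b‖ ≤ L₂ * ‖a - b‖) (hALip : ∀ a b, ‖A a - A b‖ ≤ L₃ * ‖a - b‖)
    (hL₂ : 0 ≤ L₂) (hL₃ : 0 ≤ L₃) (θ θ' : E) :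
    ‖fderiv ℝ u θ - fderiv ℝ u θ'‖ ≤
      (L₂ / μ + (L₁ * L₂ + L₁ * L₃) / μ ^ 2 + L₁ ^ 2 * L₃ / μ ^ 3) * ‖θ - θ'‖ := by
  have hDu : ∀ t, ‖fderiv ℝ u t‖ ≤ L₁ / μ := fun t => by
    rw [le_div_iff₀' hμ]
    calc μ * ‖fderiv ℝ u t‖ ≤ ‖(A (z t)).comp (fderiv ℝ u t)‖ :=
          (A (z t)).mul_opNorm_le_opNorm_comp (hA t) _
      _ ≤ L₁ := by rw [hAu t, norm_neg]; exact hB t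
  have hL₁ : 0 ≤ L₁ / μ := (norm_nonneg _).trans (hDu θ)
  have hu_lip : ‖u θ - u θ'‖ ≤ L₁ / μ * ‖θ - θ'‖ :=
    convex_univ.norm_image_sub_le_of_norm_fderiv_le (fun t _ => hu t) (fun t _ => hDu t)
      (mem_univ θ') (mem_univ θ)
  have hz_lip : ‖z θ - z θ'‖ ≤ (L₁ / μ + 1) * ‖θ - θ'‖ := by linarith [hz θ θ']
  have key := ContinuousLinearMap.mul_norm_sub_le_of_comp_eq_neg (hA θ) (hAu θ) (hAu θ')
  rw [← le_div_iff₀' hμ] at key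
  refine key.trans ?_
  calc (‖B (z θ) - B (z θ')‖ + ‖A (z θ) - A (z θ')‖ * ‖fderiv ℝ u θ'‖) / μ
      ≤ (L₂ * ‖z θ - z θ'‖ + L₃ * ‖z θ - z θ'‖ * (L₁ / μ)) / μ := by
        gcongr
        · exact hBLip _ _
        · exact hALip _ _
        · exact hDu θ'
    _ = (L₂ + L₃ * (L₁ / μ)) / μ * ‖z θ - z θ'‖ := by ring
    _ ≤ (L₂ + L₃ * (L₁ / μ)) / μ * ((L₁ / μ + 1) * ‖θ - θ'‖) := by gcongr
    _ = (L₂ / μ + (L₁ * L₂ + L₁ * L₃) / μ ^ 2 + L₁ ^ 2 * L₃ / μ ^ 3) * ‖θ - θ'‖ := by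
        field_simp; ring

end ImplicitDerivative

section StrongConvexity

variable {F : Type*} [NormedAddCommGroup F] [InnerProductSpace ℝ F]

theorem ConvexOn.inner_gradient_sub_nonneg [CompleteSpace F] {f : F → ℝ}
    (hf : ConvexOn ℝ univ f) (hd : Differentiable ℝ f) (a b : F) :
    0 ≤ ⟪∇ f a - ∇ f b, a - b⟫ := by
  have hφ : ConvexOn ℝ univ (f ∘ AffineMap.lineMap b a) :=
    hf.comp_affineMap (AffineMap.lineMap b a)
  have hder : ∀ s : ℝ, HasDerivAt (f ∘ AffineMap.lineMap b a)
      ⟪∇ f (AffineMap.lineMap b a s), a - b⟫ s := fun s => by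
    simpa using (hasGradientAt_iff_hasFDerivAt.1 (hd _).hasGradientAt).comp_hasDerivAt s
      (AffineMap.hasDerivAt_lineMap (a := b) (b := a))
  have h0 := hφ.le_slope_of_hasDerivAt (mem_univ 0) (mem_univ 1) zero_lt_one (hder 0)
  have h1 := hφ.slope_le_of_hasDerivAt (mem_univ 0) (mem_univ 1) zero_lt_one (hder 1)
  simp only [AffineMap.lineMap_apply_zero, AffineMap.lineMap_apply_one] at h0 h1
  rw [inner_sub_left]
  linarith

theorem mul_norm_sub_sq_le_inner_gradient_sub [CompleteSpace F] {f : F → ℝ} {μ : ℝ}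
    (hf : ConvexOn ℝ univ (fun u => f u - μ / 2 * ‖u‖ ^ 2)) (hd : Differentiable ℝ f)
    (a b : F) : μ * ‖a - b‖ ^ 2 ≤ ⟪∇ f a - ∇ f b, a - b⟫ := by
  have hgrad : ∀ u, HasGradientAt (fun u => f u - μ / 2 * ‖u‖ ^ 2) (∇ f u - μ • u) u := by
    intro u
    have h := (hasGradientAt_iff_hasFDerivAt.1 (hd u).hasGradientAt).sub
      ((hasStrictFDerivAt_norm_sq u).hasFDerivAt.const_mul (μ / 2))
    refine hasGradientAt_iff_hasFDerivAt.2 (h.congr_fderiv ?_)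
    ext w
    simp only [toDual_gradient, sub_apply, smul_apply,
      coe_innerSL_apply, nsmul_eq_mul, Nat.cast_ofNat, smul_eq_mul, map_sub, map_smul,
      InnerProductSpace.toDual_apply_apply, sub_right_inj]
    ring
  have h := hf.inner_gradient_sub_nonneg (fun u => (hgrad u).differentiableAt) a b
  have e : ∇ f a - μ • a - (∇ f b - μ • b) = (∇ f a - ∇ f b) - μ • (a - b) := by module
  rw [(hgrad a).gradient, (hgrad b).gradient, e, inner_sub_left, real_inner_smul_left,
    real_inner_self_eq_norm_sq] at h
  linarith

theorem mul_norm_sq_le_inner_apply_of_hasFDerivAt {g : F → F} {g' : F →L[ℝ] F} {u : F} {μ : ℝ}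
    (hg : ∀ a b, μ * ‖a - b‖ ^ 2 ≤ ⟪g a - g b, a - b⟫) (hg' : HasFDerivAt g g' u) (v : F) :
    μ * ‖v‖ ^ 2 ≤ ⟪g' v, v⟫ := by
  set ψ : ℝ → ℝ := fun s => ⟪g (u + s • v), v⟫ - s * (μ * ‖v‖ ^ 2)
  have hψ : Monotone ψ := by
    intro s s' hss'
    rcases hss'.eq_or_lt with rfl | hlt
    · rfl
    have h := hg (u + s' • v) (u + s • v)
    have e : u + s' • v - (u + s • v) = (s' - s) • v := by module
    rw [e, norm_smul, real_inner_smul_right, Real.norm_eq_abs, mul_pow, sq_abs,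
      inner_sub_left] at h
    have hδ : 0 < s' - s := sub_pos.2 hlt
    simp only [ψ]
    nlinarith
  have hline : HasDerivAt (fun s : ℝ => g (u + s • v)) (g' v) 0 := by
    have hg0 : HasFDerivAt g g' (u + (0 : ℝ) • v) := by simpa using hg'
    simpa [Function.comp_def] using
      hg0.comp_hasDerivAt 0 (((hasDerivAt_id (0 : ℝ)).smul_const v).const_add u)
  have hinner : HasDerivAt (fun s : ℝ => ⟪g (u + s • v), v⟫) ⟪g' v, v⟫ 0 := by
    simpa using hline.inner ℝ (hasDerivAt_const 0 v)
  have hder := hinner.sub ((hasDerivAt_id (0 : ℝ)).mul_const (μ * ‖v‖ ^ 2))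
  linarith [hder.nonneg_of_monotone hψ]

theorem mul_norm_le_norm_apply_of_hasFDerivAt {g : F → F} {g' : F →L[ℝ] F} {u : F} {μ : ℝ}
    (hg : ∀ a b, μ * ‖a - b‖ ^ 2 ≤ ⟪g a - g b, a - b⟫) (hg' : HasFDerivAt g g' u) (v : F) :
    μ * ‖v‖ ≤ ‖g' v‖ := by
  rcases (norm_nonneg v).eq_or_lt with hv | hv
  · rw [← hv, mul_zero]
    exact norm_nonneg _
  have h := (mul_norm_sq_le_inner_apply_of_hasFDerivAt hg hg' v).trans (real_inner_le_norm _ _)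
  rw [sq, ← mul_assoc] at h
  exact le_of_mul_le_mul_right h hv

end StrongConvexity

theorem HasGradientAt.comp_hasFDerivAt {F Z : Type*} [NormedAddCommGroup F]
    [InnerProductSpace ℝ F] [CompleteSpace F] [NormedAddCommGroup Z] [InnerProductSpace ℝ Z]
    [CompleteSpace Z] {f : Z → ℝ} {f' : Z} {g : F → Z} {A : F →L[ℝ] Z} {v : F}
    (hf : HasGradientAt f f' (g v)) (hg : HasFDerivAt g A v) :
    HasGradientAt (f ∘ g) (A.adjoint f') v := by
  refine hasGradientAt_iff_hasFDerivAt.2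
    ((hasGradientAt_iff_hasFDerivAt.1 hf).comp v hg |>.congr_fderiv ?_)
  ext w
  simp [ContinuousLinearMap.adjoint_inner_left]

theorem nonneg_of_norm_sub_le_mul {X Y : Type*} [SeminormedAddCommGroup X]
    [SeminormedAddCommGroup Y] {f : X → Y} {L : ℝ} (hf : ∀ a b, ‖f a - f b‖ ≤ L * ‖a - b‖)
    {a b : X} (hab : 0 < ‖a - b‖) : 0 ≤ L :=
  nonneg_of_mul_nonneg_left ((norm_nonneg _).trans (hf a b)) hab

namespace DiffOP

variable {n m d : ℕ}

noncomputable def inclU (n m d : ℕ) : EuclideanSpace ℝ (Fin m) →ₗᵢ[ℝ] Zspace n m d where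
  toFun u := mkz 0 u 0
  map_add' u u' := by simp [mkz, ← WithLp.toLp_add]
  map_smul' c u := by simp [mkz, ← WithLp.toLp_smul]
  norm_map' u := by simp [mkz]

noncomputable def inclθ (n m d : ℕ) : EuclideanSpace ℝ (Fin d) →ₗᵢ[ℝ] Zspace n m d where
  toFun θ := mkz 0 0 θ
  map_add' θ θ' := by simp [mkz, ← WithLp.toLp_add]
  map_smul' c θ := by simp [mkz, ← WithLp.toLp_smul]
  norm_map' θ := by simp [mkz]

theorem mkz_eq_add (x : EuclideanSpace ℝ (Fin n)) (u : EuclideanSpace ℝ (Fin m))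
    (θ : EuclideanSpace ℝ (Fin d)) : mkz x u θ = mkz x 0 0 + inclU n m d u + inclθ n m d θ := by
  simp [mkz, inclU, inclθ, ← WithLp.toLp_add]

theorem norm_mkz_sub_mkz_le (x : EuclideanSpace ℝ (Fin n)) (u u' : EuclideanSpace ℝ (Fin m))
    (θ θ' : EuclideanSpace ℝ (Fin d)) : ‖mkz x u θ - mkz x u' θ'‖ ≤ ‖u - u'‖ + ‖θ - θ'‖ := by
  have e : mkz x u θ - mkz x u' θ' = inclU n m d (u - u') + inclθ n m d (θ - θ') := by
    rw [mkz_eq_add x u, mkz_eq_add x u', map_sub, map_sub]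
    abel
  rw [e, ← (inclU n m d).norm_map, ← (inclθ n m d).norm_map]
  exact norm_add_le _ _

theorem norm_mkz_sub_mkz_θ (x : EuclideanSpace ℝ (Fin n)) (u : EuclideanSpace ℝ (Fin m))
    (θ θ' : EuclideanSpace ℝ (Fin d)) : ‖mkz x u θ - mkz x u θ'‖ = ‖θ - θ'‖ := by
  rw [mkz_eq_add x u θ, mkz_eq_add x u θ', add_sub_add_left_eq_sub, ← map_sub,
    LinearIsometry.norm_map]

theorem hasFDerivAt_mkz_u (x : EuclideanSpace ℝ (Fin n)) (u : EuclideanSpace ℝ (Fin m))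
    (θ : EuclideanSpace ℝ (Fin d)) :
    HasFDerivAt (fun v => mkz x v θ) (inclU n m d).toContinuousLinearMap u := by
  have e : (fun v => mkz x v θ) = fun v => mkz x 0 0 + inclθ n m d θ + inclU n m d v :=
    funext fun v => by rw [mkz_eq_add, add_right_comm]
  rw [e]
  exact (inclU n m d).toContinuousLinearMap.hasFDerivAt.const_add _

theorem contDiff_mkz (x : EuclideanSpace ℝ (Fin n)) {k : WithTop ℕ∞} :
    ContDiff ℝ k (fun p : EuclideanSpace ℝ (Fin m) × EuclideanSpace ℝ (Fin d) =>
      mkz x p.1 p.2) := by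
  rw [funext fun p : EuclideanSpace ℝ (Fin m) × EuclideanSpace ℝ (Fin d) => mkz_eq_add x p.1 p.2]
  exact (contDiff_const.add ((inclU n m d).contDiff.comp contDiff_fst)).add
    ((inclθ n m d).contDiff.comp contDiff_snd)

noncomputable def gradU (J : Zspace n m d → ℝ) (x : EuclideanSpace ℝ (Fin n))
    (p : EuclideanSpace ℝ (Fin m) × EuclideanSpace ℝ (Fin d)) : EuclideanSpace ℝ (Fin m) :=
  ∇ (fun u => J (mkz x u p.2)) p.1

theorem gradU_eq_adjoint {J : Zspace n m d → ℝ} (hJ : Differentiable ℝ J)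
    (x : EuclideanSpace ℝ (Fin n)) (p : EuclideanSpace ℝ (Fin m) × EuclideanSpace ℝ (Fin d)) :
    gradU J x p = (inclU n m d).toContinuousLinearMap.adjoint (∇ J (mkz x p.1 p.2)) :=
  ((hJ _).hasGradientAt.comp_hasFDerivAt (hasFDerivAt_mkz_u x p.1 p.2)).gradient

theorem contDiff_gradU {J : Zspace n m d → ℝ} (hJ : ContDiff ℝ 2 J)
    (x : EuclideanSpace ℝ (Fin n)) : ContDiff ℝ 1 (gradU J x) := by
  have hgrad : ContDiff ℝ 1 (∇ J) :=
    (InnerProductSpace.toDual ℝ _).symm.contDiff.comp (hJ.fderiv_right (by norm_num))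
  rw [funext (gradU_eq_adjoint (hJ.differentiable two_ne_zero) x)]
  exact (ContinuousLinearMap.contDiff _).comp (hgrad.comp (contDiff_mkz x))

theorem norm_gradU_sub_le {J : Zspace n m d → ℝ} (hJ : Differentiable ℝ J) {L : ℝ}
    (hgradLip : ∀ z z', ‖∇ J z - ∇ J z'‖ ≤ L * ‖z - z'‖) (x : EuclideanSpace ℝ (Fin n))
    (u : EuclideanSpace ℝ (Fin m)) (θ θ' : EuclideanSpace ℝ (Fin d)) :
    ‖gradU J x (u, θ) - gradU J x (u, θ')‖ ≤ L * ‖θ - θ'‖ := by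
  set P := (inclU n m d).toContinuousLinearMap.adjoint
  have hP : ‖P‖ ≤ 1 := by
    rw [LinearIsometryEquiv.norm_map]
    exact (inclU n m d).norm_toContinuousLinearMap_le
  rw [gradU_eq_adjoint hJ, gradU_eq_adjoint hJ, ← map_sub, ← norm_mkz_sub_mkz_θ x u]
  calc ‖P (∇ J (mkz x u θ) - ∇ J (mkz x u θ'))‖
      ≤ ‖∇ J (mkz x u θ) - ∇ J (mkz x u θ')‖ :=
        (P.le_of_opNorm_le hP _).trans_eq (one_mul _)
    _ ≤ L * ‖mkz x u θ - mkz x u θ'‖ := hgradLip _ _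

end DiffOP

open DiffOP

/-- Second bullet of Lemma 1: under (i) twice continuous
differentiability, (ii) `μ`-strong convexity in `u`, (iii) `L₁`-Lipschitz total gradient
`∇_z J`, (iv) `L₂`-Lipschitz mixed derivative `∇_θ∇_u J`, (v) `L₃`-Lipschitz Hessian
`∇²_u J`, the derivative of the implicit solution map `θ ↦ D u*(θ)` is Lipschitz with
constant `L₂/μ + (L₁L₂ + L₁L₃)/μ² + L₁²L₃/μ³`. -/
theorem solution_map_derivative_lipschitz
    {n m d : ℕ} {μ L₁ L₂ L₃ : ℝ} (hμ : 0 < μ)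
    (J : DiffOP.Zspace n m d → ℝ)
    (hJ : ContDiff ℝ 2 J)
    (hconv : ∀ (x : EuclideanSpace ℝ (Fin n)) (θ : EuclideanSpace ℝ (Fin d)),
      ConvexOn ℝ Set.univ (fun u => J (DiffOP.mkz x u θ) - μ / 2 * ‖u‖ ^ 2))
    (hgradLip : ∀ z z' : DiffOP.Zspace n m d,
      ‖gradient J z - gradient J z'‖ ≤ L₁ * ‖z - z'‖)
    (M : DiffOP.Zspace n m d → (EuclideanSpace ℝ (Fin d) →L[ℝ] EuclideanSpace ℝ (Fin m)))
    (hMdef : ∀ z, M z =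
      fderiv ℝ (fun t => gradient (fun v => J (DiffOP.mkz (DiffOP.zx z) v t)) (DiffOP.zu z))
        (DiffOP.zθ z))
    (hMLip : ∀ z z', ‖M z - M z'‖ ≤ L₂ * ‖z - z'‖)
    (H : DiffOP.Zspace n m d → (EuclideanSpace ℝ (Fin m) →L[ℝ] EuclideanSpace ℝ (Fin m)))
    (hHdef : ∀ z, H z =
      fderiv ℝ (fun v => gradient (fun w => J (DiffOP.mkz (DiffOP.zx z) w (DiffOP.zθ z))) v)
        (DiffOP.zu z))
    (hHLip : ∀ z z', ‖H z - H z'‖ ≤ L₃ * ‖z - z'‖)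
    (x : EuclideanSpace ℝ (Fin n))
    (ustar : EuclideanSpace ℝ (Fin d) → EuclideanSpace ℝ (Fin m))
    (hustar : Differentiable ℝ ustar)
    (hstat : ∀ θ, gradient (fun u => J (DiffOP.mkz x u θ)) (ustar θ) = 0) :
    ∀ θ θ', ‖fderiv ℝ ustar θ - fderiv ℝ ustar θ'‖ ≤
      (L₂ / μ + (L₁ * L₂ + L₁ * L₃) / μ ^ 2 + L₁ ^ 2 * L₃ / μ ^ 3) * ‖θ - θ'‖ := by
  intro θ θ'
  rcases eq_or_ne θ θ' with rfl | hθ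
  · simp
  set z := fun t => mkz x (ustar t) t
  have hz : 0 < ‖z θ - z θ'‖ := norm_sub_pos_iff.2 fun h => hθ (congrArg zθ h)
  have hJd : Differentiable ℝ J := hJ.differentiable two_ne_zero
  have hG : Differentiable ℝ (gradU J x) := (contDiff_gradU hJ x).differentiable one_ne_zero
  have hH : ∀ t v, μ * ‖v‖ ≤ ‖H (z t) v‖ := fun t v => by
    have hmono := mul_norm_sub_sq_le_inner_gradient_sub (hconv x t)
      (hJd.comp fun u => (hasFDerivAt_mkz_u x u t).differentiableAt)
    rw [hHdef]
    exact mul_norm_le_norm_apply_of_hasFDerivAt hmono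
      (hG.comp (differentiable_id.prodMk (differentiable_const t)) (ustar t)).hasFDerivAt v
  have hM : ∀ t, ‖M (z t)‖ ≤ L₁ := fun t => by
    rw [hMdef]
    exact norm_fderiv_le_of_lip' ℝ (nonneg_of_norm_sub_le_mul hgradLip hz)
      (.of_forall fun s => norm_gradU_sub_le hJd hgradLip x _ _ _)
  have hHM : ∀ t, (H (z t)).comp (fderiv ℝ ustar t) = -M (z t) := fun t => by
    rw [hHdef, hMdef]
    exact fderiv_comp_fderiv_eq_neg_of_apply_eq_zero (hG _) (hustar t) hstat
  exact norm_fderiv_sub_le_of_comp_eq_neg hustar (fun t t' => norm_mkz_sub_mkz_le ..) hμ hH hM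
    hHM hMLip hHLip (nonneg_of_norm_sub_le_mul hMLip hz) (nonneg_of_norm_sub_le_mul hHLip hz) θ θ'
end

section
/- Fix σ > 0, u ∈ ℝᵐ, c ∈ ℝ, and a twice differentiable map g : ℝᵈ → ℝᵐ. Define ℓ(θ) = c − (1/(2σ²))‖u − g(θ)‖². Then ℓ is twice differentiable, and if at a point θ we have ‖u − g(θ)‖ ≤ √m·β·σ², ‖D g(θ)‖ ≤ L₁/μ, and ‖D² g(θ)‖ ≤ L₂/μ + (L₁L₂ + L₁L₃)/μ² + L₁²L₃/μ³ (for positive constants β, μ, L₁, L₂, L₃), then the Hessian of ℓ at θ satisfies ‖∇²ℓ(θ)‖ ≤ √m·β·(L₂/μ + (L₁L₂ + L₁L₃)/μ² + L₁²L₃/μ³) + L₁²/(μ²σ²). -/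
/-!
The gradient of `ℓ(θ) = c - ‖u - g θ‖² / (2σ²)` is `σ⁻² Dg(θ)* (u - g θ)`. By the product rule
its derivative is `σ⁻² (D²g(θ)[·]* (u - g θ) - Dg(θ)* Dg(θ))`, whose two terms have norms at most
`‖D²g(θ)‖ ‖u - g θ‖` and `‖Dg(θ)‖²`; the assumed bounds on these three quantities give the claim.
-/

open ContinuousLinearMap

variable {E F : Type*} [NormedAddCommGroup E] [InnerProductSpace ℝ E] [CompleteSpace E]
  [NormedAddCommGroup F] [InnerProductSpace ℝ F] [CompleteSpace F]

namespace ContinuousLinearMap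

/-- Over `ℝ` the adjoint is linear rather than conjugate-linear. -/
noncomputable def adjointCLM : (E →L[ℝ] F) →L[ℝ] (F →L[ℝ] E) :=
  LinearMap.mkContinuous
    { toFun := adjoint
      map_add' := map_add _
      map_smul' := fun c A => by simp }
    1 (fun A => by simp)

@[simp] lemma adjointCLM_apply (A : E →L[ℝ] F) : adjointCLM A = adjoint A := rfl

lemma norm_adjointCLM_le : ‖(adjointCLM : (E →L[ℝ] F) →L[ℝ] F →L[ℝ] E)‖ ≤ 1 :=
  LinearMap.mkContinuous_norm_le _ zero_le_one _

lemma norm_adjoint_comp_neg_add_flip_le (A : E →L[ℝ] F) (B : E →L[ℝ] E →L[ℝ] F) (v : F) :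
    ‖adjoint A ∘L (-A) + (adjointCLM ∘L B).flip v‖ ≤ ‖A‖ ^ 2 + ‖B‖ * ‖v‖ := by
  have hB : ‖adjointCLM ∘L B‖ ≤ ‖B‖ :=
    (opNorm_comp_le _ _).trans (mul_le_of_le_one_left (norm_nonneg _) norm_adjointCLM_le)
  calc ‖adjoint A ∘L (-A) + (adjointCLM ∘L B).flip v‖
      ≤ ‖adjoint A‖ * ‖-A‖ + ‖(adjointCLM ∘L B).flip‖ * ‖v‖ :=
        (norm_add_le _ _).trans (add_le_add (opNorm_comp_le _ _) (le_opNorm _ _))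
    _ ≤ ‖A‖ ^ 2 + ‖B‖ * ‖v‖ := by
        rw [norm_neg, LinearIsometryEquiv.norm_map, opNorm_flip, ← sq]
        gcongr

end ContinuousLinearMap

section

variable {g : E → F} {x : E}

lemma HasFDerivAt.hasGradientAt_const_sub_mul_norm_sub_sq {g' : E →L[ℝ] F}
    (hg : HasFDerivAt g g' x) (u : F) (a c : ℝ) :
    HasGradientAt (fun y => c - a * ‖u - g y‖ ^ 2) ((2 * a) • adjoint g' (u - g x)) x := by
  rw [hasGradientAt_iff_hasFDerivAt]
  refine ((hasFDerivAt_const c x).sub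
    (((hasFDerivAt_const u x).sub hg).norm_sq.const_mul a)).congr_fderiv ?_
  ext h
  simp only [Pi.sub_apply, map_sub, zero_sub, comp_neg, sub_comp, neg_sub, neg_apply, smul_apply,
    sub_apply, comp_apply, coe_innerSL_apply, nsmul_eq_mul, Nat.cast_ofNat, smul_eq_mul, map_smul,
    InnerProductSpace.toDual_apply_apply, adjoint_inner_left]
  ring

lemma HasFDerivAt.adjoint_apply_sub {G : E → E →L[ℝ] F} {G' : E →L[ℝ] E →L[ℝ] F}
    {g' : E →L[ℝ] F} (hG : HasFDerivAt G G' x) (hg : HasFDerivAt g g' x) (u : F) :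
    HasFDerivAt (fun y => adjoint (G y) (u - g y))
      (adjoint (G x) ∘L (-g') + (adjointCLM ∘L G').flip (u - g x)) x := by
  simpa using (adjointCLM.hasFDerivAt.comp x hG).clm_apply ((hasFDerivAt_const u x).sub hg)

lemma hasFDerivAt_gradient_const_sub_mul_norm_sub_sq {D2g : E →L[ℝ] E →L[ℝ] F}
    (hg : Differentiable ℝ g) (hD2g : HasFDerivAt (fderiv ℝ g) D2g x) (u : F) (a c : ℝ) :
    HasFDerivAt (gradient fun y => c - a * ‖u - g y‖ ^ 2)
      ((2 * a) • (adjoint (fderiv ℝ g x) ∘L (-fderiv ℝ g x) + (adjointCLM ∘L D2g).flip (u - g x)))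
      x := by
  have hgrad : (gradient fun y => c - a * ‖u - g y‖ ^ 2) =
      fun y => (2 * a) • adjoint (fderiv ℝ g y) (u - g y) :=
    funext fun y => ((hg y).hasFDerivAt.hasGradientAt_const_sub_mul_norm_sub_sq u a c).gradient
  rw [hgrad]
  exact (hD2g.adjoint_apply_sub (hg x).hasFDerivAt u).const_smul (2 * a)

lemma norm_fderiv_gradient_const_sub_mul_norm_sub_sq_le (hg : ContDiff ℝ 2 g) (u : F)
    {a : ℝ} (ha : 0 ≤ a) (c : ℝ) (x : E) :
    ‖fderiv ℝ (gradient fun y => c - a * ‖u - g y‖ ^ 2) x‖ ≤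
      2 * a * (‖fderiv ℝ g x‖ ^ 2 + ‖fderiv ℝ (fderiv ℝ g) x‖ * ‖u - g x‖) := by
  have hD2g : HasFDerivAt (fderiv ℝ g) (fderiv ℝ (fderiv ℝ g) x) x :=
    ((hg.fderiv_right (m := 1) le_rfl).differentiable one_ne_zero x).hasFDerivAt
  rw [(hasFDerivAt_gradient_const_sub_mul_norm_sub_sq
    (hg.differentiable two_ne_zero) hD2g u a c).fderiv, norm_smul, Real.norm_of_nonneg (by positivity)]
  exact mul_le_mul_of_nonneg_left (norm_adjoint_comp_neg_add_flip_le _ _ _) (by positivity)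

end

/-- Hessian bound for the log-density of the truncated Gaussian policy:
for `ℓ(θ) = c − (1/(2σ²))‖u − g(θ)‖²` with `g` twice differentiable, `ℓ` is twice
differentiable, and under the stated pointwise bounds on `‖u − g(θ)‖`, `‖D g(θ)‖` and
`‖D² g(θ)‖`, the Hessian of `ℓ` satisfies
`‖∇²ℓ(θ)‖ ≤ √m·β·(L₂/μ + (L₁L₂+L₁L₃)/μ² + L₁²L₃/μ³) + L₁²/(μ²σ²)`. -/
theorem hessian_log_policy_bound
    {m : ℕ} {d : ℕ} {σ : ℝ} (hσ : 0 < σ)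
    (u : EuclideanSpace ℝ (Fin m)) (c : ℝ)
    (g : EuclideanSpace ℝ (Fin d) → EuclideanSpace ℝ (Fin m))
    (hg : ContDiff ℝ 2 g) :
    ContDiff ℝ 2 (fun θ => c - 1 / (2 * σ ^ 2) * ‖u - g θ‖ ^ 2) ∧
      ∀ {β μ L₁ L₂ L₃ : ℝ}, 0 < β → 0 < μ → 0 < L₁ → 0 < L₂ → 0 < L₃ →
        ∀ θ : EuclideanSpace ℝ (Fin d),
          ‖u - g θ‖ ≤ Real.sqrt m * β * σ ^ 2 →
          ‖fderiv ℝ g θ‖ ≤ L₁ / μ →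
          ‖fderiv ℝ (fun t => fderiv ℝ g t) θ‖ ≤
            L₂ / μ + (L₁ * L₂ + L₁ * L₃) / μ ^ 2 + L₁ ^ 2 * L₃ / μ ^ 3 →
          ‖fderiv ℝ (fun t =>
              gradient (fun θ' => c - 1 / (2 * σ ^ 2) * ‖u - g θ'‖ ^ 2) t) θ‖ ≤
            Real.sqrt m * β *
                (L₂ / μ + (L₁ * L₂ + L₁ * L₃) / μ ^ 2 + L₁ ^ 2 * L₃ / μ ^ 3) +
              L₁ ^ 2 / (μ ^ 2 * σ ^ 2) := by
  refine ⟨contDiff_const.sub (contDiff_const.mul ((contDiff_const.sub hg).norm_sq ℝ)), ?_⟩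
  intro β μ L₁ L₂ L₃ hβ hμ hL₁ hL₂ hL₃ θ hu hDg hD2g
  set H := L₂ / μ + (L₁ * L₂ + L₁ * L₃) / μ ^ 2 + L₁ ^ 2 * L₃ / μ ^ 3
  calc _ ≤ 2 * (1 / (2 * σ ^ 2)) *
        (‖fderiv ℝ g θ‖ ^ 2 + ‖fderiv ℝ (fderiv ℝ g) θ‖ * ‖u - g θ‖) :=
        norm_fderiv_gradient_const_sub_mul_norm_sub_sq_le hg u (by positivity) c θ
    _ ≤ 2 * (1 / (2 * σ ^ 2)) * ((L₁ / μ) ^ 2 + H * (Real.sqrt m * β * σ ^ 2)) := by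
        gcongr
    _ = Real.sqrt m * β * H + L₁ ^ 2 / (μ ^ 2 * σ ^ 2) := by
        field_simp
        ring
end

section
/- Let J : ℝ^{n_ζ} × ℝᵈ → ℝ and z : ℝ^{n_ζ} × ℝᵈ → ℝ^{n_z} be twice continuously differentiable. Suppose ζ* : ℝᵈ → ℝ^{n_ζ} and λ : ℝᵈ → ℝ^{n_z} are differentiable and satisfy, identically in θ, the KKT conditions ∇_ζ J(ζ*(θ); θ) − λ(θ)ᵀ ∇_ζ z(ζ*(θ); θ) = 0 and z(ζ*(θ); θ) = 0. At a given θ, define (all evaluated at (ζ*(θ), θ)): A = ∇_ζ z, C = ∇_θ z, B = ∇²_{θζ} J − Σ_{j} λ_j(θ) ∇²_{θζ} z_j, and D = ∇²_{ζζ} J − Σ_{j} λ_j(θ) ∇²_{ζζ} z_j. If D is invertible and A D⁻¹ Aᵀ is invertible, then the derivative of the primal solution satisfies ∇_θ ζ*(θ) = D⁻¹Aᵀ(A D⁻¹ Aᵀ)⁻¹(A D⁻¹ B − C) − D⁻¹ B. -/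
/-!
Differentiating the feasibility identity `z(ζ*(θ), θ) = 0` in `θ` gives `A ζ*' + C = 0`, and
differentiating the stationarity identity `∇_ζ J = Σⱼ λⱼ ∇_ζ zⱼ` along `θ ↦ (ζ*(θ), θ)` gives
`D ζ*' + B = Aᵀ λ'`: the terms in which `λ` is differentiated collect into `Aᵀ λ'`. Solving this
bordered system by block elimination, first for `ζ*'` in terms of `λ'` through `D⁻¹`, then for
`λ'` through `(A D⁻¹ Aᵀ)⁻¹`, yields the formula.
-/

open ContinuousLinearMap InnerProductSpace

section

variable {𝕜 : Type*} [NontriviallyNormedField 𝕜] {E Θ F : Type*}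
  [NormedAddCommGroup E] [NormedSpace 𝕜 E] [NormedAddCommGroup Θ] [NormedSpace 𝕜 Θ]
  [NormedAddCommGroup F] [NormedSpace 𝕜 F]

theorem fderiv_comp_inl_eq {f : E × Θ → F} {x : E} {t : Θ} (hf : DifferentiableAt 𝕜 f (x, t)) :
    (fderiv 𝕜 f (x, t)).comp (inl 𝕜 E Θ) = fderiv 𝕜 (fun y => f (y, t)) x :=
  (hf.hasFDerivAt.comp x (hasFDerivAt_prodMk_left x t)).fderiv.symm

theorem fderiv_comp_inr_eq {f : E × Θ → F} {x : E} {t : Θ} (hf : DifferentiableAt 𝕜 f (x, t)) :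
    (fderiv 𝕜 f (x, t)).comp (inr 𝕜 E Θ) = fderiv 𝕜 (fun s => f (x, s)) t :=
  (hf.hasFDerivAt.comp t (hasFDerivAt_prodMk_right x t)).fderiv.symm

theorem hasFDerivAt_comp_graph {f : E × Θ → F} {g : Θ → E} {g' : Θ →L[𝕜] E} {t : Θ}
    (hf : DifferentiableAt 𝕜 f (g t, t)) (hg : HasFDerivAt g g' t) :
    HasFDerivAt (fun s => f (g s, s))
      ((fderiv 𝕜 (fun x => f (x, t)) (g t)).comp g' + fderiv 𝕜 (fun s => f (g t, s)) t) t := by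
  refine (hf.hasFDerivAt.comp (f := fun s => (g s, s)) t
    (hg.prodMk (hasFDerivAt_id t))).congr_fderiv ?_
  ext w
  rw [← fderiv_comp_inl_eq hf, ← fderiv_comp_inr_eq hf]
  exact ((fderiv 𝕜 f (g t, t)).comp_inl_add_comp_inr (g' w, w)).symm

theorem linearize_graph_identity {ι : Type*} [Fintype ι] {G₀ : E × Θ → F} {G : ι → E × Θ → F}
    {g : Θ → E} {g' : Θ →L[𝕜] E} {c : ι → Θ → 𝕜} {c' : ι → Θ →L[𝕜] 𝕜} {t : Θ}
    (hG₀ : DifferentiableAt 𝕜 G₀ (g t, t)) (hG : ∀ j, DifferentiableAt 𝕜 (G j) (g t, t))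
    (hg : HasFDerivAt g g' t) (hc : ∀ j, HasFDerivAt (c j) (c' j) t)
    (h : ∀ s, G₀ (g s, s) = ∑ j, c j s • G j (g s, s)) :
    (fderiv 𝕜 (fun x => G₀ (x, t)) (g t) -
        ∑ j, c j t • fderiv 𝕜 (fun x => G j (x, t)) (g t)).comp g' +
      (fderiv 𝕜 (fun s => G₀ (g t, s)) t - ∑ j, c j t • fderiv 𝕜 (fun s => G j (g t, s)) t) =
      ∑ j, (c' j).smulRight (G j (g t, t)) := by
  have hlhs := hasFDerivAt_comp_graph hG₀ hg
  have hrhs := HasFDerivAt.fun_sum (u := Finset.univ) fun j _ =>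
    (hc j).smul (hasFDerivAt_comp_graph (hG j) hg)
  rw [show (fun s => G₀ (g s, s)) = _ from funext h] at hlhs
  have heq := hlhs.unique hrhs
  rw [sub_comp, finsetSum_comp, sub_add_sub_comm, heq]
  simp only [smul_comp, smul_add, Finset.sum_add_distrib]
  abel

theorem eq_of_bordered_system {D Dinv : E →L[𝕜] E} {A : E →L[𝕜] F} {At : F →L[𝕜] E}
    {Sinv : F →L[𝕜] F} {X B : Θ →L[𝕜] E} {L C : Θ →L[𝕜] F}
    (hDinv : Dinv.comp D = ContinuousLinearMap.id 𝕜 E)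
    (hSinv : Sinv.comp (A.comp (Dinv.comp At)) = ContinuousLinearMap.id 𝕜 F)
    (h₁ : D.comp X + B = At.comp L) (h₂ : A.comp X + C = 0) :
    X = Dinv.comp (At.comp (Sinv.comp (A.comp (Dinv.comp B) - C))) - Dinv.comp B := by
  have hX : X = Dinv.comp (At.comp L) - Dinv.comp B := by
    rw [← comp_sub, ← h₁, add_sub_cancel_right, ← comp_assoc, hDinv, id_comp]
  have hSchur : (A.comp (Dinv.comp At)).comp L = A.comp (Dinv.comp B) - C := by
    rw [hX, comp_sub] at h₂
    simp only [comp_assoc]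
    rw [← sub_eq_zero, ← h₂]
    abel
  have hL : L = Sinv.comp (A.comp (Dinv.comp B) - C) := by
    rw [← hSchur, ← comp_assoc, hSinv, id_comp]
  rw [hX, hL]

end

section

variable {E Θ : Type*} [NormedAddCommGroup E] [InnerProductSpace ℝ E] [CompleteSpace E]
  [NormedAddCommGroup Θ] [NormedSpace ℝ Θ]

noncomputable def partialGradient (f : E × Θ → ℝ) (q : E × Θ) : E :=
  gradient (fun x => f (x, q.2)) q.1

theorem contDiff_partialGradient {m n : WithTop ℕ∞} {f : E × Θ → ℝ} (hf : ContDiff ℝ n f)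
    (hmn : m + 1 ≤ n) : ContDiff ℝ m (partialGradient f) := by
  -- Over `ℝ` the inverse Riesz map is linear, not merely conjugate-linear.
  have hriesz : ContDiff ℝ m fun φ : StrongDual ℝ E => (toDual ℝ E).symm φ :=
    ((toDual ℝ E).symm.toLinearIsometry.toContinuousLinearMap : StrongDual ℝ E →L[ℝ] E).contDiff
  have hf_diff : Differentiable ℝ f := (hf.of_le (le_add_self.trans hmn)).differentiable one_ne_zero
  have hf' : partialGradient f =
      fun q => (toDual ℝ E).symm ((fderiv ℝ f q).comp (inl ℝ E Θ)) := by
    funext ⟨x, t⟩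
    rw [fderiv_comp_inl_eq (hf_diff (x, t))]
    rfl
  rw [hf']
  exact hriesz.comp ((hf.fderiv_right hmn).clm_comp contDiff_const)

theorem adjoint_fderiv_apply_eq_sum {ι : Type*} [Fintype ι] {f : E → EuclideanSpace ℝ ι} {x : E}
    (hf : DifferentiableAt ℝ f x) (μ : EuclideanSpace ℝ ι) :
    adjoint (fderiv ℝ f x) μ = ∑ j, μ j • gradient (fun y => f y j) x := by
  have hcoord : ∀ j, fderiv ℝ (fun y => f y j) x = (EuclideanSpace.proj j).comp (fderiv ℝ f x) :=
    fun j => ((EuclideanSpace.proj j : EuclideanSpace ℝ ι →L[ℝ] ℝ).hasFDerivAt.comp x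
      hf.hasFDerivAt).fderiv
  refine ext_inner_right ℝ fun v => ?_
  simp only [adjoint_inner_left, sum_inner, real_inner_smul_left, gradient, toDual_symm_apply,
    hcoord, PiLp.inner_apply, comp_apply, RCLike.inner_apply, conj_trivial, mul_comm]
  rfl

end

theorem kkt_sensitivity_formula_general
    {nζ nz d : ℕ}
    (J : EuclideanSpace ℝ (Fin nζ) × EuclideanSpace ℝ (Fin d) → ℝ)
    (z : EuclideanSpace ℝ (Fin nζ) × EuclideanSpace ℝ (Fin d) → EuclideanSpace ℝ (Fin nz))
    (hJ : ContDiff ℝ 2 J) (hz : ContDiff ℝ 2 z)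
    (ζstar : EuclideanSpace ℝ (Fin d) → EuclideanSpace ℝ (Fin nζ))
    (lam : EuclideanSpace ℝ (Fin d) → EuclideanSpace ℝ (Fin nz))
    (hζ : Differentiable ℝ ζstar) (hlam : Differentiable ℝ lam)
    (hstat : ∀ θ, gradient (fun ζ => J (ζ, θ)) (ζstar θ) =
      (ContinuousLinearMap.adjoint (fderiv ℝ (fun ζ => z (ζ, θ)) (ζstar θ))) (lam θ))
    (hfeas : ∀ θ, z (ζstar θ, θ) = 0)
    (θ : EuclideanSpace ℝ (Fin d))
    (A : EuclideanSpace ℝ (Fin nζ) →L[ℝ] EuclideanSpace ℝ (Fin nz))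
    (hA : A = fderiv ℝ (fun ζ => z (ζ, θ)) (ζstar θ))
    (Cm : EuclideanSpace ℝ (Fin d) →L[ℝ] EuclideanSpace ℝ (Fin nz))
    (hCm : Cm = fderiv ℝ (fun t => z (ζstar θ, t)) θ)
    (B : EuclideanSpace ℝ (Fin d) →L[ℝ] EuclideanSpace ℝ (Fin nζ))
    (hB : B = fderiv ℝ (fun t => gradient (fun ζ => J (ζ, t)) (ζstar θ)) θ -
      ∑ j : Fin nz, lam θ j •
        fderiv ℝ (fun t => gradient (fun ζ => z (ζ, t) j) (ζstar θ)) θ)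
    (D : EuclideanSpace ℝ (Fin nζ) →L[ℝ] EuclideanSpace ℝ (Fin nζ))
    (hD : D = fderiv ℝ (fun ζ => gradient (fun ζ' => J (ζ', θ)) ζ) (ζstar θ) -
      ∑ j : Fin nz, lam θ j •
        fderiv ℝ (fun ζ => gradient (fun ζ' => z (ζ', θ) j) ζ) (ζstar θ))
    (Dinv : EuclideanSpace ℝ (Fin nζ) →L[ℝ] EuclideanSpace ℝ (Fin nζ))
    (hDinv₂ : Dinv.comp D = ContinuousLinearMap.id ℝ _)
    (Sinv : EuclideanSpace ℝ (Fin nz) →L[ℝ] EuclideanSpace ℝ (Fin nz))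
    (hSinv₂ : Sinv.comp (A.comp (Dinv.comp (ContinuousLinearMap.adjoint A))) =
      ContinuousLinearMap.id ℝ _) :
    fderiv ℝ ζstar θ =
      (Dinv.comp ((ContinuousLinearMap.adjoint A).comp
        (Sinv.comp ((A.comp (Dinv.comp B)) - Cm)))) - Dinv.comp B := by
  have hzd : Differentiable ℝ z := hz.differentiable two_ne_zero
  have hz_partial (t) : DifferentiableAt ℝ (fun ζ => z (ζ, t)) (ζstar t) :=
    hzd.differentiableAt.comp _ (differentiableAt_id.prodMk (differentiableAt_const t))
  have h_feas : A.comp (fderiv ℝ ζstar θ) + Cm = 0 := by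
    have h := hasFDerivAt_comp_graph (hzd (ζstar θ, θ)) (hζ θ).hasFDerivAt
    rw [show (fun s => z (ζstar s, s)) = fun _ => 0 from funext hfeas] at h
    rw [hA, hCm]
    exact h.unique (hasFDerivAt_const 0 θ)
  have h_stat : D.comp (fderiv ℝ ζstar θ) + B = (adjoint A).comp (fderiv ℝ lam θ) := by
    have hpg {f : EuclideanSpace ℝ (Fin nζ) × EuclideanSpace ℝ (Fin d) → ℝ}
        (hf : ContDiff ℝ 2 f) : Differentiable ℝ (partialGradient f) :=
      (contDiff_partialGradient hf (m := 1) (by norm_num)).differentiable one_ne_zero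
    have hzj (j : Fin nz) : ContDiff ℝ 2 fun q => z q j :=
      (EuclideanSpace.proj j : _ →L[ℝ] ℝ).contDiff.comp hz
    have hlamj (j : Fin nz) : HasFDerivAt (fun s => lam s j)
        ((EuclideanSpace.proj j : _ →L[ℝ] ℝ).comp (fderiv ℝ lam θ)) θ :=
      (EuclideanSpace.proj j : _ →L[ℝ] ℝ).hasFDerivAt.comp θ (hlam θ).hasFDerivAt
    rw [hD, hB]
    refine (linearize_graph_identity (hpg hJ _) (fun j => hpg (hzj j) _) (hζ θ).hasFDerivAt hlamj
      fun s => (hstat s).trans (adjoint_fderiv_apply_eq_sum (hz_partial s) _)).trans ?_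
    ext1 w
    simp [hA, adjoint_fderiv_apply_eq_sum (hz_partial θ), partialGradient]
  exact eq_of_bordered_system hDinv₂ hSinv₂ h_stat h_feas

/-- Proposition 2 (gradient of the optimization-based policy):
differentiating the KKT identities of the optimization-based policy in `θ` and solving
the resulting bordered linear system yields
`∇_θ ζ*(θ) = D⁻¹Aᵀ(A D⁻¹ Aᵀ)⁻¹(A D⁻¹ B − C) − D⁻¹ B`. -/
theorem kkt_sensitivity_formula
    {nζ nz d : ℕ}
    (J : EuclideanSpace ℝ (Fin nζ) × EuclideanSpace ℝ (Fin d) → ℝ)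
    (z : EuclideanSpace ℝ (Fin nζ) × EuclideanSpace ℝ (Fin d) → EuclideanSpace ℝ (Fin nz))
    (hJ : ContDiff ℝ 2 J) (hz : ContDiff ℝ 2 z)
    (ζstar : EuclideanSpace ℝ (Fin d) → EuclideanSpace ℝ (Fin nζ))
    (lam : EuclideanSpace ℝ (Fin d) → EuclideanSpace ℝ (Fin nz))
    (hζ : Differentiable ℝ ζstar) (hlam : Differentiable ℝ lam)
    (hstat : ∀ θ, gradient (fun ζ => J (ζ, θ)) (ζstar θ) =
      (ContinuousLinearMap.adjoint (fderiv ℝ (fun ζ => z (ζ, θ)) (ζstar θ))) (lam θ))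
    (hfeas : ∀ θ, z (ζstar θ, θ) = 0)
    (θ : EuclideanSpace ℝ (Fin d))
    (A : EuclideanSpace ℝ (Fin nζ) →L[ℝ] EuclideanSpace ℝ (Fin nz))
    (hA : A = fderiv ℝ (fun ζ => z (ζ, θ)) (ζstar θ))
    (Cm : EuclideanSpace ℝ (Fin d) →L[ℝ] EuclideanSpace ℝ (Fin nz))
    (hCm : Cm = fderiv ℝ (fun t => z (ζstar θ, t)) θ)
    (B : EuclideanSpace ℝ (Fin d) →L[ℝ] EuclideanSpace ℝ (Fin nζ))
    (hB : B = fderiv ℝ (fun t => gradient (fun ζ => J (ζ, t)) (ζstar θ)) θ -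
      ∑ j : Fin nz, lam θ j •
        fderiv ℝ (fun t => gradient (fun ζ => z (ζ, t) j) (ζstar θ)) θ)
    (D : EuclideanSpace ℝ (Fin nζ) →L[ℝ] EuclideanSpace ℝ (Fin nζ))
    (hD : D = fderiv ℝ (fun ζ => gradient (fun ζ' => J (ζ', θ)) ζ) (ζstar θ) -
      ∑ j : Fin nz, lam θ j •
        fderiv ℝ (fun ζ => gradient (fun ζ' => z (ζ', θ) j) ζ) (ζstar θ))
    (Dinv : EuclideanSpace ℝ (Fin nζ) →L[ℝ] EuclideanSpace ℝ (Fin nζ))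
    (hDinv₁ : D.comp Dinv = ContinuousLinearMap.id ℝ _)
    (hDinv₂ : Dinv.comp D = ContinuousLinearMap.id ℝ _)
    (Sinv : EuclideanSpace ℝ (Fin nz) →L[ℝ] EuclideanSpace ℝ (Fin nz))
    (hSinv₁ : (A.comp (Dinv.comp (ContinuousLinearMap.adjoint A))).comp Sinv =
      ContinuousLinearMap.id ℝ _)
    (hSinv₂ : Sinv.comp (A.comp (Dinv.comp (ContinuousLinearMap.adjoint A))) =
      ContinuousLinearMap.id ℝ _) :
    fderiv ℝ ζstar θ =
      (Dinv.comp ((ContinuousLinearMap.adjoint A).comp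
        (Sinv.comp ((A.comp (Dinv.comp B)) - Cm)))) - Dinv.comp B :=
  kkt_sensitivity_formula_general J z hJ hz ζstar lam hζ hlam hstat hfeas θ A hA Cm hCm B hB D hD
    Dinv hDinv₂ Sinv hSinv₂
end

section
/- Let C : ℝᵈ → ℝ be differentiable with L_C-Lipschitz gradient, where L_C > 0. Let θ ∈ ℝᵈ, let ĝ ∈ ℝᵈ be an inexact gradient with ‖ĝ − ∇C(θ)‖² ≤ e for some e ≥ 0, let η > 0, and set θ' = θ − η ĝ. Then C(θ') ≤ C(θ) − (η/2 − η²L_C)‖∇C(θ)‖² + (η/2 + η²L_C) e. -/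
/-!
Along the segment `t ↦ x + t • v` the slope of `f` grows at most like `L t ‖v‖²`, which gives the
quadratic upper bound `f (x + v) ≤ f x + ⟪∇f x, v⟫ + L/2 ‖v‖²`. For the step `v = -η ĝ`, the
polarization identity bounds `-⟪∇f, ĝ⟫` and the parallelogram law bounds `‖ĝ‖²`, both in terms of
`‖∇f‖²` and the error `‖ĝ - ∇f‖² ≤ e`.
-/

open Set InnerProductSpace

theorem le_add_deriv_add_half_of_deriv_sub_le {g g' : ℝ → ℝ} {M : ℝ}
    (hg : ∀ t, HasDerivAt g (g' t) t) (hg' : ∀ t ∈ Ioo (0 : ℝ) 1, g' t - g' 0 ≤ M * t) :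
    g 1 ≤ g 0 + g' 0 + M / 2 := by
  set φ : ℝ → ℝ := fun t ↦ g t - g' 0 * t - M / 2 * t ^ 2
  have hφ : ∀ t, HasDerivAt φ (g' t - g' 0 - M * t) t := fun t ↦
    (((hg t).sub ((hasDerivAt_id' t).const_mul (g' 0))).sub
      (((hasDerivAt_id' t).pow 2).const_mul (M / 2))).congr_deriv (by ring)
  have hanti : AntitoneOn φ (Icc 0 1) := by
    refine antitoneOn_of_hasDerivWithinAt_nonpos (convex_Icc 0 1)
      (fun t _ ↦ (hφ t).continuousAt.continuousWithinAt) (fun t _ ↦ (hφ t).hasDerivWithinAt) ?_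
    rw [interior_Icc]
    intro t ht
    linarith [hg' t ht]
  have hend := hanti (left_mem_Icc.2 zero_le_one) (right_mem_Icc.2 zero_le_one) zero_le_one
  simp only [φ] at hend
  linarith

section InnerProductSpace

variable {E : Type*} [NormedAddCommGroup E] [InnerProductSpace ℝ E]

theorem norm_sq_sub_norm_sub_sq_le_two_mul_inner (x y : E) :
    ‖x‖ ^ 2 - ‖y - x‖ ^ 2 ≤ 2 * ⟪x, y⟫_ℝ := by
  rw [norm_sub_sq_real, real_inner_comm]
  linarith [sq_nonneg ‖y‖]

theorem norm_sq_le_two_mul_norm_sq_add_norm_sub_sq (x y : E) :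
    ‖y‖ ^ 2 ≤ 2 * (‖x‖ ^ 2 + ‖y - x‖ ^ 2) := by
  have := parallelogram_law_with_norm ℝ x (y - x)
  rw [add_sub_cancel] at this
  linarith [sq_nonneg ‖x - (y - x)‖]

variable [CompleteSpace E] {f : E → ℝ}

theorem Differentiable.hasDerivAt_comp_add_smul (hf : Differentiable ℝ f) (x v : E) (t : ℝ) :
    HasDerivAt (fun t : ℝ ↦ f (x + t • v)) ⟪gradient f (x + t • v), v⟫_ℝ t := by
  have hline : HasDerivAt (fun t : ℝ ↦ x + t • v) v t := by
    simpa using ((hasDerivAt_id t).smul_const v).const_add x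
  have hcomp := (hf (x + t • v)).hasGradientAt.hasFDerivAt.comp_hasDerivAt t hline
  rwa [toDual_apply_apply] at hcomp

theorem Differentiable.apply_add_le_of_lipschitz_gradient (hf : Differentiable ℝ f) {L : ℝ}
    (hlip : ∀ a b, ‖gradient f a - gradient f b‖ ≤ L * ‖a - b‖) (x v : E) :
    f (x + v) ≤ f x + ⟪gradient f x, v⟫_ℝ + L / 2 * ‖v‖ ^ 2 := by
  have hslope : ∀ t ∈ Ioo (0 : ℝ) 1, ⟪gradient f (x + t • v), v⟫_ℝ -
      ⟪gradient f (x + (0 : ℝ) • v), v⟫_ℝ ≤ L * ‖v‖ ^ 2 * t := by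
    intro t ht
    calc ⟪gradient f (x + t • v), v⟫_ℝ - ⟪gradient f (x + (0 : ℝ) • v), v⟫_ℝ
        = ⟪gradient f (x + t • v) - gradient f x, v⟫_ℝ := by simp [inner_sub_left]
      _ ≤ ‖gradient f (x + t • v) - gradient f x‖ * ‖v‖ := real_inner_le_norm _ _
      _ ≤ L * ‖t • v‖ * ‖v‖ := by
          gcongr
          simpa using hlip (x + t • v) x
      _ = L * ‖v‖ ^ 2 * t := by
          rw [norm_smul, Real.norm_of_nonneg ht.1.le]
          ring
  simpa only [one_smul, zero_smul, add_zero, mul_div_right_comm] using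
    le_add_deriv_add_half_of_deriv_sub_le (hf.hasDerivAt_comp_add_smul x v) hslope

end InnerProductSpace

theorem inexact_gradient_descent_step_general
    {d : ℕ} (C : EuclideanSpace ℝ (Fin d) → ℝ)
    {L_C : ℝ} (hL : 0 < L_C)
    (hdiff : Differentiable ℝ C)
    (hlip : ∀ a b, ‖gradient C a - gradient C b‖ ≤ L_C * ‖a - b‖)
    (θ ghat : EuclideanSpace ℝ (Fin d))
    {e : ℝ} (hg : ‖ghat - gradient C θ‖ ^ 2 ≤ e)
    {η : ℝ} (hη : 0 < η) :
    C (θ - η • ghat) ≤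
      C θ - (η / 2 - η ^ 2 * L_C) * ‖gradient C θ‖ ^ 2 + (η / 2 + η ^ 2 * L_C) * e := by
  have descent := hdiff.apply_add_le_of_lipschitz_gradient hlip θ (-(η • ghat))
  rw [← sub_eq_add_neg, inner_neg_right, real_inner_smul_right, norm_neg, norm_smul,
    Real.norm_of_nonneg hη.le] at descent
  have hinner := norm_sq_sub_norm_sub_sq_le_two_mul_inner (gradient C θ) ghat
  have hnorm := norm_sq_le_two_mul_norm_sq_add_norm_sub_sq (gradient C θ) ghat
  linear_combination descent + η / 2 * hinner + η ^ 2 * L_C / 2 * hnorm +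
    (η / 2 + η ^ 2 * L_C) * hg

/-- Per-iteration descent inequality for an inexact gradient step on a
function with `L_C`-Lipschitz gradient. -/
theorem inexact_gradient_descent_step
    {d : ℕ} (C : EuclideanSpace ℝ (Fin d) → ℝ)
    {L_C : ℝ} (hL : 0 < L_C)
    (hdiff : Differentiable ℝ C)
    (hlip : ∀ a b, ‖gradient C a - gradient C b‖ ≤ L_C * ‖a - b‖)
    (θ ghat : EuclideanSpace ℝ (Fin d))
    {e : ℝ} (he : 0 ≤ e) (hg : ‖ghat - gradient C θ‖ ^ 2 ≤ e)
    {η : ℝ} (hη : 0 < η) :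
    C (θ - η • ghat) ≤
      C θ - (η / 2 - η ^ 2 * L_C) * ‖gradient C θ‖ ^ 2 + (η / 2 + η ^ 2 * L_C) * e :=
  inexact_gradient_descent_step_general C hL hdiff hlip θ ghat hg hη
end

section
/- Let C : ℝᵈ → ℝ be differentiable with L_C-Lipschitz gradient (L_C > 0), and suppose C(θ) ≥ C(θ̄) for all θ, where θ̄ ∈ ℝᵈ. Fix ε ≥ 0 and K ∈ ℕ with K ≥ 1, set the stepsize η = 1/(4L_C), and let θ⁽⁰⁾, …, θ⁽ᴷ⁾ be generated by θ⁽ᵏ⁺¹⁾ = θ⁽ᵏ⁾ − η ĝ_k where each ĝ_k ∈ ℝᵈ satisfies ‖ĝ_k − ∇C(θ⁽ᵏ⁾)‖² ≤ ε. Then min_{k = 0, …, K−1} ‖∇C(θ⁽ᵏ⁾)‖² ≤ 16 L_C (C(θ⁽⁰⁾) − C(θ̄))/K + 3ε. -/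
/-!
By the descent lemma for an `L`-smooth `C`, a step `x ↦ x - g / (4L)` along an estimate `g` of
`∇C x` decreases `C` by at least `(‖∇C x‖² - ‖g - ∇C x‖²) / (8L)`. Over the first `K` steps these
decreases telescope, so `∑_{k<K} ‖∇C θ⁽ᵏ⁾‖² ≤ 8L (C θ⁽⁰⁾ - C θ̄) + K ε`, and the smallest term is
at most the average.
-/

open Finset

section Smooth

variable {F : Type*} [NormedAddCommGroup F] [InnerProductSpace ℝ F] [CompleteSpace F]
  {C : F → ℝ} {L : ℝ}

theorem le_add_inner_gradient_add_mul_norm_sq (hC : Differentiable ℝ C)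
    (hlip : ∀ a b, ‖gradient C a - gradient C b‖ ≤ L * ‖a - b‖) (x y : F) :
    C y ≤ C x + inner ℝ (gradient C x) (y - x) + L / 2 * ‖y - x‖ ^ 2 := by
  set v := y - x
  set ψ : ℝ → ℝ := fun t ↦ C (x + t • v) - t * inner ℝ (gradient C x) v - L / 2 * t ^ 2 * ‖v‖ ^ 2
  have hψ : ∀ t, HasDerivAt ψ
      (inner ℝ (gradient C (x + t • v) - gradient C x) v - L * t * ‖v‖ ^ 2) t := by
    intro t
    have hline : HasDerivAt (fun t : ℝ ↦ x + t • v) v t := by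
      simpa using ((hasDerivAt_id t).smul_const v).const_add x
    refine ((((hC _).hasFDerivAt.comp_hasDerivAt t hline).sub
      ((hasDerivAt_id t).mul_const (inner ℝ (gradient C x) v))).sub
      (((hasDerivAt_pow 2 t).const_mul (L / 2)).mul_const (‖v‖ ^ 2))).congr_deriv ?_
    simp only [inner_sub_left, inner_gradient_left]
    ring
  have hψ_anti : AntitoneOn ψ (Set.Ici 0) := by
    refine antitoneOn_of_hasDerivWithinAt_nonpos (convex_Ici 0)
      (fun t _ ↦ (hψ t).continuousAt.continuousWithinAt) (fun t _ ↦ (hψ t).hasDerivWithinAt) ?_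
    intro t ht
    rw [interior_Ici, Set.mem_Ioi] at ht
    have hgrad : ‖gradient C (x + t • v) - gradient C x‖ ≤ L * (t * ‖v‖) := by
      simpa [norm_smul, abs_of_pos ht] using hlip (x + t • v) x
    nlinarith [real_inner_le_norm (gradient C (x + t • v) - gradient C x) v, norm_nonneg v]
  have hψ_one_le_zero : ψ 1 ≤ ψ 0 :=
    hψ_anti Set.self_mem_Ici (Set.mem_Ici.2 zero_le_one) zero_le_one
  simp only [ψ, v, one_smul, zero_smul, add_zero, add_sub_cancel, one_mul, one_pow, mul_one,
    zero_mul, sub_zero, ne_eq, OfNat.ofNat_ne_zero, not_false_eq_true, zero_pow, mul_zero]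
    at hψ_one_le_zero
  linarith

theorem sq_norm_gradient_le_of_inexact_gradient_step (hL : 0 < L) (hC : Differentiable ℝ C)
    (hlip : ∀ a b, ‖gradient C a - gradient C b‖ ≤ L * ‖a - b‖) (x g : F) :
    ‖gradient C x‖ ^ 2 ≤
      8 * L * (C x - C (x - (1 / (4 * L)) • g)) + ‖g - gradient C x‖ ^ 2 := by
  have hdesc := le_add_inner_gradient_add_mul_norm_sq hC hlip x (x - (1 / (4 * L)) • g)
  rw [sub_sub_cancel_left, inner_neg_right, norm_neg, real_inner_smul_right, norm_smul,
    Real.norm_of_nonneg (by positivity)] at hdesc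
  rw [norm_sub_sq_real, real_inner_comm]
  generalize C (x - (1 / (4 * L)) • g) = Cy at hdesc ⊢
  field_simp at hdesc
  linarith [sq_nonneg ‖g‖]

end Smooth

theorem exists_lt_le_of_le_mul_sub_succ_add {a f : ℕ → ℝ} {c b m : ℝ} {K : ℕ} (hK : 0 < K)
    (hc : 0 ≤ c) (hstep : ∀ k < K, a k ≤ c * (f k - f (k + 1)) + b) (hm : m ≤ f K) :
    ∃ k < K, a k ≤ c * (f 0 - m) / K + b := by
  have hsum : ∑ k ∈ range K, a k ≤ c * (f 0 - m) + K * b :=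
    calc ∑ k ∈ range K, a k
        ≤ ∑ k ∈ range K, (c * (f k - f (k + 1)) + b) :=
          sum_le_sum fun k hk ↦ hstep k (mem_range.1 hk)
      _ = c * (f 0 - f K) + K * b := by
          rw [sum_add_distrib, ← mul_sum, sum_range_sub', sum_const, card_range, nsmul_eq_mul]
      _ ≤ c * (f 0 - m) + K * b := by gcongr
  have hKpos : (0 : ℝ) < K := Nat.cast_pos.2 hK
  obtain ⟨k, hk, hak⟩ := exists_le_of_sum_le (nonempty_range_iff.2 hK.ne') (f := a)
    (g := fun _ ↦ c * (f 0 - m) / K + b) <| by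
      rw [sum_const, card_range, nsmul_eq_mul]
      field_simp
      linarith
  exact ⟨k, mem_range.1 hk, hak⟩

theorem diffop_convergence_deterministic_core_general
    {d : ℕ} (C : EuclideanSpace ℝ (Fin d) → ℝ)
    {L_C : ℝ} (hL : 0 < L_C)
    (hdiff : Differentiable ℝ C)
    (hlip : ∀ a b, ‖gradient C a - gradient C b‖ ≤ L_C * ‖a - b‖)
    (θbar : EuclideanSpace ℝ (Fin d)) (hlow : ∀ θ, C θbar ≤ C θ)
    {ε : ℝ} {K : ℕ} (hK : 1 ≤ K)
    (θ : ℕ → EuclideanSpace ℝ (Fin d)) (g : ℕ → EuclideanSpace ℝ (Fin d))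
    (hupd : ∀ k, θ (k + 1) = θ k - (1 / (4 * L_C)) • g k)
    (herr : ∀ k, ‖g k - gradient C (θ k)‖ ^ 2 ≤ ε) :
    ∃ k < K, ‖gradient C (θ k)‖ ^ 2 ≤
      16 * L_C * (C (θ 0) - C θbar) / K + 3 * ε := by
  have hstep : ∀ k < K, ‖gradient C (θ k)‖ ^ 2 ≤ 8 * L_C * (C (θ k) - C (θ (k + 1))) + ε :=
    fun k _ ↦ by
      rw [hupd]
      exact (sq_norm_gradient_le_of_inexact_gradient_step hL hdiff hlip (θ k) (g k)).trans
        (add_le_add_right (herr k) _)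
  obtain ⟨k, hk, hbound⟩ := exists_lt_le_of_le_mul_sub_succ_add
    (a := fun k ↦ ‖gradient C (θ k)‖ ^ 2) (f := fun k ↦ C (θ k)) hK (by positivity) hstep
    (hlow (θ K))
  refine ⟨k, hk, hbound.trans ?_⟩
  have hε : 0 ≤ ε := (sq_nonneg _).trans (herr 0)
  have hgap : 0 ≤ 8 * L_C * (C (θ 0) - C θbar) / K := by
    have := sub_nonneg.2 (hlow (θ 0))
    positivity
  have hdouble : 16 * L_C * (C (θ 0) - C θbar) / K = 2 * (8 * L_C * (C (θ 0) - C θbar) / K) := by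
    ring
  linarith

/-- Deterministic core of Theorem 1 (non-asymptotic convergence of
DiffOP): with stepsize `η = 1/(4 L_C)` and every gradient estimate `ε`-accurate in
squared norm, inexact gradient descent reaches a point with
`‖∇C‖² ≤ 16 L_C (C(θ⁽⁰⁾) − C(θ̄))/K + 3ε` within the first `K` iterates. -/
theorem diffop_convergence_deterministic_core
    {d : ℕ} (C : EuclideanSpace ℝ (Fin d) → ℝ)
    {L_C : ℝ} (hL : 0 < L_C)
    (hdiff : Differentiable ℝ C)
    (hlip : ∀ a b, ‖gradient C a - gradient C b‖ ≤ L_C * ‖a - b‖)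
    (θbar : EuclideanSpace ℝ (Fin d)) (hlow : ∀ θ, C θbar ≤ C θ)
    {ε : ℝ} (hε : 0 ≤ ε) {K : ℕ} (hK : 1 ≤ K)
    (θ : ℕ → EuclideanSpace ℝ (Fin d)) (g : ℕ → EuclideanSpace ℝ (Fin d))
    (hupd : ∀ k, θ (k + 1) = θ k - (1 / (4 * L_C)) • g k)
    (herr : ∀ k, ‖g k - gradient C (θ k)‖ ^ 2 ≤ ε) :
    ∃ k < K, ‖gradient C (θ k)‖ ^ 2 ≤
      16 * L_C * (C (θ 0) - C θbar) / K + 3 * ε :=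
  diffop_convergence_deterministic_core_general C hL hdiff hlip θbar hlow hK θ g hupd herr
end

section
/- For θ = (θ₁, θ₂, θ₃, θ₄) ∈ ℝ⁴ with θ₁ ≥ 0 and θ₂ > 0, and û = (û₁, …, û₆) ∈ ℝ⁶, define the inner rollout x̂₁(û; θ) = 5 and x̂_{i+1}(û; θ) = θ₃ x̂_i(û; θ) + θ₄ û_i for i = 1, …, 5, and the inner objective Ĵ(û; θ) = Σ_{i=1}^{6} (θ₁ x̂_i(û; θ)² + θ₂ û_i²). Then Ĵ(·; θ) has a unique global minimizer û*(θ) ∈ ℝ⁶. Define the closed-loop cost C(θ) = Σ_{t=1}^{6} (x_t² + u_t²) where u_t = û*_t(θ), x₁ = 5 and x_{t+1} = x_t − 0.5 u_t. Then for θ⁽¹⁾ = (1, 1, 2, −0.5), θ⁽²⁾ = (2, 1, 2, −0.5), and α = 1/2, one has C(α θ⁽¹⁾ + (1 − α) θ⁽²⁾) > α C(θ⁽¹⁾) + (1 − α) C(θ⁽²⁾); in particular, C is not convex on ℝ⁴. -/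
/-- Inner rollout of the policy model: `x̂₁ = 5`, `x̂_{i+1} = θ₃ x̂_i + θ₄ û_i`
(0-indexed: `xhat θ u k` is the paper's `x̂_{k+1}`). -/
noncomputable def xhat (θ : ℝ × ℝ × ℝ × ℝ) (u : Fin 6 → ℝ) : ℕ → ℝ
  | 0 => 5
  | i + 1 => θ.2.2.1 * xhat θ u i + θ.2.2.2 * (if h : i < 6 then u ⟨i, h⟩ else 0)

/-- Inner objective `Ĵ(û; θ) = Σ_{i=1}^{6} (θ₁ x̂_i(û; θ)² + θ₂ û_i²)`. -/
noncomputable def Jhat (θ : ℝ × ℝ × ℝ × ℝ) (u : Fin 6 → ℝ) : ℝ :=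
  ∑ i : Fin 6, (θ.1 * xhat θ u i ^ 2 + θ.2.1 * u i ^ 2)

/-- Closed-loop rollout under the true dynamics: `x₁ = 5`, `x_{t+1} = x_t − 0.5 u_t`
(0-indexed: `xcl u k` is the paper's `x_{k+1}`). -/
noncomputable def xcl (u : Fin 6 → ℝ) : ℕ → ℝ
  | 0 => 5
  | t + 1 => xcl u t - 0.5 * (if h : t < 6 then u ⟨t, h⟩ else 0)

/-- Closed-loop cost `C(θ) = Σ_{t=1}^{6} (x_t² + u_t²)` with `u = û*(θ)`. -/
noncomputable def Ccl (ustar : ℝ × ℝ × ℝ × ℝ → Fin 6 → ℝ) (θ : ℝ × ℝ × ℝ × ℝ) : ℝ :=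
  ∑ t : Fin 6, (xcl (ustar θ) t ^ 2 + ustar θ t ^ 2)

/-!
Expanding `Ĵ(·; θ)` around `u` gives `Ĵ(u + t d) = Ĵ(u) + 2 t F(u, d) + t² S(d)` with `S ≥ 0`
and `S(d) ≥ θ₂ ‖d‖²`. So `u` is a global minimizer iff `F(u, ·) = 0`, and a minimizer is
unique; one exists because `Ĵ` is continuous and coercive. For `θ₁ ∈ {1, 3/2, 2}` the
minimizers are explicit rational vectors, verified by `F = 0`, and the closed-loop costs
`C ≈ 578.48, 575.57, 571.50` place the midpoint value above the average `≈ 574.99`.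
-/

noncomputable section

open Finset

theorem sq_norm_le_sum_sq {ι : Type*} [Fintype ι] (u : ι → ℝ) : ‖u‖ ^ 2 ≤ ∑ i, u i ^ 2 := by
  have hsum : 0 ≤ ∑ i, u i ^ 2 := sum_nonneg fun i _ => sq_nonneg (u i)
  rw [← Real.le_sqrt (norm_nonneg u) hsum, pi_norm_le_iff_of_nonneg (Real.sqrt_nonneg _)]
  intro i
  rw [Real.le_sqrt (norm_nonneg _) hsum, Real.norm_eq_abs, sq_abs]
  exact single_le_sum (fun j _ => sq_nonneg (u j)) (mem_univ i)

section InnerProblem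

variable (θ : ℝ × ℝ × ℝ × ℝ)

theorem continuous_xhat (n : ℕ) : Continuous fun u => xhat θ u n := by
  induction n with
  | zero => exact continuous_const
  | succ i ih =>
    refine (continuous_const.mul ih).add (continuous_const.mul ?_)
    split_ifs
    exacts [continuous_apply _, continuous_const]

theorem continuous_Jhat : Continuous (Jhat θ) :=
  continuous_finsetSum _ fun i _ =>
    (continuous_const.mul ((continuous_xhat θ i).pow 2)).add
      (continuous_const.mul ((continuous_apply i).pow 2))

theorem xhat_add_smul (u d : Fin 6 → ℝ) (t : ℝ) (n : ℕ) :
    xhat θ (u + t • d) n = xhat θ u n + t * (xhat θ d n - xhat θ 0 n) := by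
  induction n with
  | zero => simp [xhat]
  | succ i ih =>
    simp only [xhat, ih]
    split_ifs <;> simp <;> ring

/-- The linear term of `Jhat θ` at `u` in the direction `d`; `xhat θ d - xhat θ 0` is the
response of the model dynamics to `d` from the zero initial state. -/
def firstVariation (u d : Fin 6 → ℝ) : ℝ :=
  ∑ i : Fin 6, (θ.1 * xhat θ u i * (xhat θ d i - xhat θ 0 i) + θ.2.1 * u i * d i)

def secondVariation (d : Fin 6 → ℝ) : ℝ :=
  ∑ i : Fin 6, (θ.1 * (xhat θ d i - xhat θ 0 i) ^ 2 + θ.2.1 * d i ^ 2)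

theorem Jhat_add_smul (u d : Fin 6 → ℝ) (t : ℝ) :
    Jhat θ (u + t • d) =
      Jhat θ u + 2 * t * firstVariation θ u d + t ^ 2 * secondVariation θ d := by
  simp only [Jhat, firstVariation, secondVariation, mul_sum, ← sum_add_distrib]
  refine sum_congr rfl fun i _ => ?_
  rw [xhat_add_smul]
  simp only [Pi.add_apply, Pi.smul_apply, smul_eq_mul]
  ring

variable {θ}

theorem secondVariation_nonneg (h₁ : 0 ≤ θ.1) (h₂ : 0 ≤ θ.2.1) (d : Fin 6 → ℝ) :
    0 ≤ secondVariation θ d :=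
  sum_nonneg fun i _ => by positivity

theorem eq_zero_of_secondVariation_eq_zero (h₁ : 0 ≤ θ.1) (h₂ : 0 < θ.2.1) {d : Fin 6 → ℝ}
    (hd : secondVariation θ d = 0) : d = 0 := by
  have hterms := (sum_eq_zero_iff_of_nonneg fun i _ => by positivity).mp hd
  funext i
  have hi : θ.2.1 * d i ^ 2 = 0 :=
    ((add_eq_zero_iff_of_nonneg (by positivity) (by positivity)).mp (hterms i (mem_univ i))).2
  simpa [h₂.ne'] using hi

theorem firstVariation_eq_zero_of_isMin {u : Fin 6 → ℝ} (hu : ∀ w, Jhat θ u ≤ Jhat θ w)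
    (d : Fin 6 → ℝ) : firstVariation θ u d = 0 := by
  have hquad : ∀ t : ℝ, 0 ≤ secondVariation θ d * (t * t) + 2 * firstVariation θ u d * t + 0 :=
    fun t => by nlinarith [hu (u + t • d), Jhat_add_smul θ u d t]
  have := discrim_le_zero hquad
  rw [discrim] at this
  nlinarith [sq_nonneg (firstVariation θ u d)]

theorem isMin_of_firstVariation_eq_zero (h₁ : 0 ≤ θ.1) (h₂ : 0 ≤ θ.2.1) {u : Fin 6 → ℝ}
    (hu : ∀ d, firstVariation θ u d = 0) (w : Fin 6 → ℝ) : Jhat θ u ≤ Jhat θ w := by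
  have hw := Jhat_add_smul θ u (w - u) 1
  rw [one_smul, add_sub_cancel, hu] at hw
  linarith [secondVariation_nonneg h₁ h₂ (w - u)]

theorem Jhat_minimizer_unique (h₁ : 0 ≤ θ.1) (h₂ : 0 < θ.2.1) {u v : Fin 6 → ℝ}
    (hu : ∀ w, Jhat θ u ≤ Jhat θ w) (hv : ∀ w, Jhat θ v ≤ Jhat θ w) : v = u := by
  have hexp := Jhat_add_smul θ u (v - u) 1
  rw [one_smul, add_sub_cancel, firstVariation_eq_zero_of_isMin hu] at hexp
  have hS : secondVariation θ (v - u) = 0 := by linarith [hu v, hv u]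
  exact sub_eq_zero.mp (eq_zero_of_secondVariation_eq_zero h₁ h₂ hS)

theorem mul_sq_norm_le_Jhat (h₁ : 0 ≤ θ.1) (h₂ : 0 ≤ θ.2.1) (u : Fin 6 → ℝ) :
    θ.2.1 * ‖u‖ ^ 2 ≤ Jhat θ u :=
  calc θ.2.1 * ‖u‖ ^ 2 ≤ ∑ i, θ.2.1 * u i ^ 2 := by
        rw [← mul_sum]; exact mul_le_mul_of_nonneg_left (sq_norm_le_sum_sq u) h₂
    _ ≤ Jhat θ u := sum_le_sum fun i _ => le_add_of_nonneg_left (by positivity)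

theorem exists_Jhat_minimizer (h₁ : 0 ≤ θ.1) (h₂ : 0 < θ.2.1) :
    ∃ u : Fin 6 → ℝ, ∀ w, Jhat θ u ≤ Jhat θ w := by
  have hcoercive : Filter.Tendsto (Jhat θ) (Filter.cocompact _) Filter.atTop :=
    Filter.tendsto_atTop_mono (mul_sq_norm_le_Jhat h₁ h₂.le)
      (((Filter.tendsto_pow_atTop two_ne_zero).const_mul_atTop h₂).comp
        tendsto_norm_cocompact_atTop)
  exact (continuous_Jhat θ).exists_forall_le hcoercive

end InnerProblem

-- Exact solutions of the linear stationarity equations; the last control is `0` because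
-- the state it drives, `x̂₇`, is not penalised.
def uOpt₁ : Fin 6 → ℝ :=
  ![2278100 / 148853, 1051680 / 148853, 482560 / 148853, 215040 / 148853, 81920 / 148853, 0]

def uOpt₂ : Fin 6 → ℝ :=
  ![181780 / 11603, 78320 / 11603, 33600 / 11603, 14080 / 11603, 5120 / 11603, 0]

def uOptMid : Fin 6 → ℝ :=
  ![123858300 / 7989659, 55191360 / 7989659, 24468480 / 7989659, 10567680 / 7989659,
    3932160 / 7989659, 0]

theorem firstVariation_uOpt₁ (d : Fin 6 → ℝ) : firstVariation (1, 1, 2, -0.5) uOpt₁ d = 0 := by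
  simp [firstVariation, xhat, uOpt₁, Fin.sum_univ_six]
  ring

theorem firstVariation_uOpt₂ (d : Fin 6 → ℝ) : firstVariation (2, 1, 2, -0.5) uOpt₂ d = 0 := by
  simp [firstVariation, xhat, uOpt₂, Fin.sum_univ_six]
  ring

theorem firstVariation_uOptMid (d : Fin 6 → ℝ) :
    firstVariation (3 / 2, 1, 2, -0.5) uOptMid d = 0 := by
  simp [firstVariation, xhat, uOptMid, Fin.sum_univ_six]
  ring

theorem Ccl_midpoint_gt {ustar : ℝ × ℝ × ℝ × ℝ → Fin 6 → ℝ}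
    (h₁ : ustar (1, 1, 2, -0.5) = uOpt₁) (h₂ : ustar (2, 1, 2, -0.5) = uOpt₂)
    (hmid : ustar (3 / 2, 1, 2, -0.5) = uOptMid) :
    1 / 2 * Ccl ustar (1, 1, 2, -0.5) + 1 / 2 * Ccl ustar (2, 1, 2, -0.5) <
      Ccl ustar (3 / 2, 1, 2, -0.5) := by
  simp [Ccl, h₁, h₂, hmid, xcl, uOpt₁, uOpt₂, uOptMid, Fin.sum_univ_six]
  norm_num

end

/-- Non-convexity example (Appendix C.1): for `θ₁ ≥ 0, θ₂ > 0` the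
inner problem has a unique global minimizer `û*(θ)`, and the closed-loop cost `C` violates
the convexity inequality at `θ⁽¹⁾ = (1,1,2,−0.5)`, `θ⁽²⁾ = (2,1,2,−0.5)`, `α = 1/2`;
in particular `C` is not convex. -/
theorem closed_loop_cost_nonconvex :
    (∀ θ : ℝ × ℝ × ℝ × ℝ, 0 ≤ θ.1 → 0 < θ.2.1 →
      ∃! u0 : Fin 6 → ℝ, ∀ u : Fin 6 → ℝ, Jhat θ u0 ≤ Jhat θ u) ∧
    ∀ ustar : ℝ × ℝ × ℝ × ℝ → Fin 6 → ℝ,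
      (∀ θ : ℝ × ℝ × ℝ × ℝ, 0 ≤ θ.1 → 0 < θ.2.1 →
        ∀ u : Fin 6 → ℝ, Jhat θ (ustar θ) ≤ Jhat θ u) →
      Ccl ustar (((1 : ℝ) / 2) • ((1 : ℝ), (1 : ℝ), (2 : ℝ), (-0.5 : ℝ)) +
          (1 - (1 : ℝ) / 2) • ((2 : ℝ), (1 : ℝ), (2 : ℝ), (-0.5 : ℝ))) >
        (1 : ℝ) / 2 * Ccl ustar (1, 1, 2, -0.5) +
          (1 - (1 : ℝ) / 2) * Ccl ustar (2, 1, 2, -0.5) ∧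
      ¬ ConvexOn ℝ Set.univ (Ccl ustar) := by
  refine ⟨fun θ h₁ h₂ => ?_, fun ustar hstar => ?_⟩
  · obtain ⟨u, hu⟩ := exists_Jhat_minimizer h₁ h₂
    exact ⟨u, hu, fun v hv => Jhat_minimizer_unique h₁ h₂ hu hv⟩
  have hopt : ∀ q : ℝ, 0 ≤ q → ∀ u, (∀ d, firstVariation (q, 1, 2, -0.5) u d = 0) →
      ustar (q, 1, 2, -0.5) = u := fun q hq u hu =>
    Jhat_minimizer_unique hq one_pos (isMin_of_firstVariation_eq_zero hq zero_le_one hu)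
      (hstar _ hq one_pos)
  have hmid : ((1 : ℝ) / 2) • ((1 : ℝ), (1 : ℝ), (2 : ℝ), (-0.5 : ℝ)) +
      (1 - (1 : ℝ) / 2) • ((2 : ℝ), (1 : ℝ), (2 : ℝ), (-0.5 : ℝ)) = (3 / 2, 1, 2, -0.5) := by
    norm_num [Prod.ext_iff]
  have hgt : Ccl ustar (((1 : ℝ) / 2) • ((1 : ℝ), (1 : ℝ), (2 : ℝ), (-0.5 : ℝ)) +
          (1 - (1 : ℝ) / 2) • ((2 : ℝ), (1 : ℝ), (2 : ℝ), (-0.5 : ℝ))) >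
        (1 : ℝ) / 2 * Ccl ustar (1, 1, 2, -0.5) +
          (1 - (1 : ℝ) / 2) * Ccl ustar (2, 1, 2, -0.5) := by
    rw [hmid, show (1 : ℝ) - 1 / 2 = 1 / 2 by norm_num]
    exact Ccl_midpoint_gt (hopt 1 zero_le_one _ firstVariation_uOpt₁)
      (hopt 2 zero_le_two _ firstVariation_uOpt₂)
      (hopt (3 / 2) (by norm_num) _ firstVariation_uOptMid)
  exact ⟨hgt, fun hconv => (hconv.2 trivial trivial (by norm_num) (by norm_num)
    (by norm_num)).not_gt hgt⟩
end
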